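/- Let d ≥ 2 and let H be a d-uniform simple hypergraph such that any two distinct edges with nonempty intersection meet in exactly d − 1 vertices. Let x be a simplicial vertex of H and S an edge of H containing x. If a family of edges S is an induced matching in H \ S, then S is an induced matching in H. -/

import Mathlib

/-! If `S ⊆ ⋃ M`, pick `T ∈ M` through `x`. Since `S` and `T` share `d - 1` vertices, `S ∪ T` has
`d + 1` vertices, all in `N[x]`, so `U = (S ∪ T) \ {x}` is an edge by simpliciality. Then `U ≠ S`
and `U ⊆ ⋃ M`, so `U ∈ M`; but `U` meets `T ∈ M` in `T \ {x}`, which is nonempty because it has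
as many elements as `S ∩ T ∋ x`. Hence `S ⊄ ⋃ M`, and then erasing `S` changes nothing. -/

variable {V : Type*} [DecidableEq V] [Fintype V]

/-- The union of a family of edges. -/
def unionEdges (M : Finset (Finset V)) : Finset V := M.biUnion id

/-- `E` is the edge set of a simple hypergraph: every edge has at least two
vertices and no edge is contained in another distinct edge. -/
def IsSimpleHypergraph (E : Finset (Finset V)) : Prop :=
  (∀ S ∈ E, 2 ≤ S.card) ∧ ∀ S ∈ E, ∀ T ∈ E, S ⊆ T → S = T

/-- A family `M` of edges of `E` is a semi-induced matching if no edge of `E`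
outside `M` is contained in the union of the members of `M`. -/
def IsSemiInducedMatching (E M : Finset (Finset V)) : Prop :=
  M ⊆ E ∧ ∀ S ∈ E, S ∉ M → ¬ S ⊆ unionEdges M

/-- An induced matching is a semi-induced matching whose edges are pairwise disjoint. -/
def IsInducedMatching (E M : Finset (Finset V)) : Prop :=
  IsSemiInducedMatching E M ∧ ∀ S ∈ M, ∀ T ∈ M, S ≠ T → Disjoint S T

/-- A self semi-induced matching is a semi-induced matching in which no member
is contained in the union of the other members. -/
def IsSelfSemiInducedMatching (E M : Finset (Finset V)) : Prop :=
  IsSemiInducedMatching E M ∧ ∀ S ∈ M, ¬ S ⊆ unionEdges (M.erase S)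

/-- A self-contained semi-induced matching. -/
def IsSelfContainedSemiInducedMatching (E M : Finset (Finset V)) : Prop :=
  M ⊆ E ∧
  (∀ S ∈ E, S ∉ M → ¬ S ⊆ unionEdges M ∨ ∃ T ∈ M, T ⊆ S ∪ unionEdges (M.erase T)) ∧
  ∀ S ∈ M, ¬ S ⊆ unionEdges (M.erase S)

/-- A self disjoint set of edges. -/
def IsSelfDisjointSet (E M : Finset (Finset V)) : Prop :=
  M ⊆ E ∧ (∀ S ∈ M, ¬ S ⊆ unionEdges (M.erase S)) ∧
  ∃ M₀ ⊆ M, IsInducedMatching E M₀ ∧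
    ∀ S ∈ M, S ∉ M₀ → ∃ T ∈ M₀, (S \ T).card = 1

/-- A self semi-disjoint set of edges. -/
def IsSelfSemiDisjointSet (E M : Finset (Finset V)) : Prop :=
  M ⊆ E ∧ (∀ S ∈ M, ¬ S ⊆ unionEdges (M.erase S)) ∧
  ∃ M₀ ⊆ M, IsSemiInducedMatching E M₀ ∧
    ∀ S ∈ M, S ∉ M₀ → ∃ T ∈ M₀, (S \ T).card = 1

/-- The closed neighborhood `N[x]` of a vertex. -/
def closedNbhd (E : Finset (Finset V)) (x : V) : Finset V :=
  insert x ((E.filter fun S => x ∈ S).biUnion id)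

/-- A simplicial vertex of a `d`-uniform hypergraph: every `d`-subset of `N[x]`
is an edge. -/
def IsSimplicialVertex (E : Finset (Finset V)) (d : ℕ) (x : V) : Prop :=
  ∀ T ⊆ closedNbhd E x, T.card = d → T ∈ E

/-- `N(S)`, the union of `T \ S` over all edges `T` meeting `S`. -/
def edgeNbhd (E : Finset (Finset V)) (S : Finset V) : Finset V :=
  (E.filter fun T => (T ∩ S).Nonempty).biUnion fun T => T \ S

section

variable {α : Type*} [DecidableEq α] {E M : Finset (Finset α)} {S T : Finset α} {x : α} {d : ℕ}

theorem mem_unionEdges {v : α} : v ∈ unionEdges M ↔ ∃ T ∈ M, v ∈ T := by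
  simp [unionEdges]

theorem subset_unionEdges (hT : T ∈ M) : T ⊆ unionEdges M :=
  Finset.subset_biUnion_of_mem id hT

theorem subset_closedNbhd (hT : T ∈ E) (hxT : x ∈ T) : T ⊆ closedNbhd E x :=
  (Finset.subset_biUnion_of_mem id (Finset.mem_filter.mpr ⟨hT, hxT⟩)).trans
    (Finset.subset_insert _ _)

theorem card_union_of_card_inter_eq_pred (hS : S.card = d) (hT : T.card = d)
    (hST : (S ∩ T).card = d - 1) (hne : (S ∩ T).Nonempty) : (S ∪ T).card = d + 1 := by
  have := Finset.card_union_add_card_inter S T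
  have := hne.card_pos
  omega

theorem IsSimplicialVertex.erase_union_mem (hx : IsSimplicialVertex E d x) (hS : S ∈ E)
    (hT : T ∈ E) (hxS : x ∈ S) (hxT : x ∈ T) (hcard : (S ∪ T).card = d + 1) :
    (S ∪ T).erase x ∈ E := by
  refine hx _ ((Finset.erase_subset _ _).trans ?_) ?_
  · exact Finset.union_subset (subset_closedNbhd hS hxS) (subset_closedNbhd hT hxT)
  · rw [Finset.card_erase_of_mem (Finset.mem_union_left _ hxS), hcard, Nat.add_sub_cancel]

theorem IsSemiInducedMatching.of_erase (hM : IsSemiInducedMatching (E.erase S) M)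
    (hS : ¬ S ⊆ unionEdges M) : IsSemiInducedMatching E M := by
  refine ⟨hM.1.trans (Finset.erase_subset _ _), fun S' hS' hS'M hsub => ?_⟩
  obtain rfl | hne := eq_or_ne S' S
  · exact hS hsub
  · exact hM.2 S' (Finset.mem_erase.mpr ⟨hne, hS'⟩) hS'M hsub

theorem IsInducedMatching.not_subset_unionEdges_of_isSimplicialVertex
    (hUnif : ∀ S ∈ E, S.card = d)
    (hInt : ∀ S ∈ E, ∀ T ∈ E, S ≠ T → (S ∩ T).Nonempty → (S ∩ T).card = d - 1)
    (hx : IsSimplicialVertex E d x) (hS : S ∈ E) (hxS : x ∈ S)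
    (hM : IsInducedMatching (E.erase S) M) : ¬ S ⊆ unionEdges M := by
  obtain ⟨⟨hME, hsemi⟩, hdisj⟩ := hM
  intro hsub
  obtain ⟨T, hTM, hxT⟩ := mem_unionEdges.mp (hsub hxS)
  obtain ⟨hTS, hT⟩ := Finset.mem_erase.mp (hME hTM)
  have hmeet : (S ∩ T).Nonempty := ⟨x, Finset.mem_inter.mpr ⟨hxS, hxT⟩⟩
  have hinter := hInt S hS T hT hTS.symm hmeet
  set U := (S ∪ T).erase x
  have hxU : x ∉ U := Finset.notMem_erase x _
  have hUE : U ∈ E := hx.erase_union_mem hS hT hxS hxT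
    (card_union_of_card_inter_eq_pred (hUnif S hS) (hUnif T hT) hinter hmeet)
  have hUsub : U ⊆ unionEdges M :=
    (Finset.erase_subset _ _).trans (Finset.union_subset hsub (subset_unionEdges hTM))
  have hUM : U ∈ M := by
    by_contra hUM
    exact hsemi U (Finset.mem_erase.mpr ⟨(ne_of_mem_of_not_mem' hxS hxU).symm, hUE⟩) hUM hUsub
  obtain ⟨y, hy⟩ : (T.erase x).Nonempty := by
    rw [← Finset.card_pos, Finset.card_erase_of_mem hxT, hUnif T hT, ← hinter]
    exact hmeet.card_pos
  have hyU : y ∈ U := Finset.erase_subset_erase x Finset.subset_union_right hy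
  exact Finset.disjoint_left.mp (hdisj U hUM T hTM (ne_of_mem_of_not_mem' hxT hxU).symm)
    hyU (Finset.mem_of_mem_erase hy)

end

theorem inducedMatching_of_eraseEdge_general
    (E : Finset (Finset V)) (d : ℕ)
    (hUnif : ∀ S ∈ E, S.card = d)
    (hInt : ∀ S ∈ E, ∀ T ∈ E, S ≠ T → (S ∩ T).Nonempty → (S ∩ T).card = d - 1)
    (x : V) (hx : IsSimplicialVertex E d x)
    (S : Finset V) (hS : S ∈ E) (hxS : x ∈ S)
    (M : Finset (Finset V)) (hM : IsInducedMatching (E.erase S) M) :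
    IsInducedMatching E M :=
  ⟨hM.1.of_erase (hM.not_subset_unionEdges_of_isSimplicialVertex hUnif hInt hx hS hxS), hM.2⟩

/-- in a `d`-uniform simple hypergraph in which any two distinct
meeting edges intersect in exactly `d - 1` vertices, if `x` is a simplicial
vertex and `S` an edge containing `x`, then every induced matching in `H \ S`
is an induced matching in `H`. -/
theorem inducedMatching_of_eraseEdge
    (E : Finset (Finset V)) (d : ℕ) (hd : 2 ≤ d)
    (hH : IsSimpleHypergraph E) (hUnif : ∀ S ∈ E, S.card = d)
    (hInt : ∀ S ∈ E, ∀ T ∈ E, S ≠ T → (S ∩ T).Nonempty → (S ∩ T).card = d - 1)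
    (x : V) (hx : IsSimplicialVertex E d x)
    (S : Finset V) (hS : S ∈ E) (hxS : x ∈ S)
    (M : Finset (Finset V)) (hM : IsInducedMatching (E.erase S) M) :
    IsInducedMatching E M :=
  inducedMatching_of_eraseEdge_general E d hUnif hInt x hx S hS hxS M hM
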